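/- Let A be a commutative ring, (a_1,...,a_{n+1}) a unimodular row with splitting (b_1,...,b_{n+1}), and set s = Σ_{i=1}^n a_i b_i. Then (1-s)·s = Σ_{i=1}^{n-1} a_i (b_i a_{n+1} b_{n+1}) + (a_n a_{n+1})(b_n b_{n+1}). In particular the tuple (a_1,...,a_{n-1}, a_n a_{n+1}, b_1 a_{n+1} b_{n+1},..., b_{n-1} a_{n+1} b_{n+1}, b_n b_{n+1}, s) satisfies the defining equation x·yᵀ = z(1-z) of the quadric Q_{2n}. -/
import Mathlib


/-- Lemma (`genidealgenbyunimod`, last part): with `(a, b)` a unimodular row of length `n+1`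
with its splitting and `s = ∑_{i=1}^{n} aᵢbᵢ`, one has
`(1-s)·s = ∑_{i=1}^{n-1} aᵢ·(bᵢa_{n+1}b_{n+1}) + (aₙa_{n+1})·(bₙb_{n+1})`,
so the corresponding tuple satisfies the defining equation `x·yᵀ = z(1-z)` of `Q_{2n}`.
(Indices are 0-based below.) -/
theorem quadric_point_from_unimodular_row {A : Type*} [CommRing A] (n : ℕ) (hn : 1 ≤ n)
    (a b : Fin (n + 1) → A) (hsplit : ∑ i, a i * b i = 1)
    (s : A) (hs : s = ∑ i : Fin n, a i.castSucc * b i.castSucc) :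
    (1 - s) * s =
      (∑ i : Fin (n - 1),
          a (Fin.castLE (by omega) i) *
            (b (Fin.castLE (by omega) i) * a (Fin.last n) * b (Fin.last n))) +
        (a ⟨n - 1, by omega⟩ * a (Fin.last n)) * (b ⟨n - 1, by omega⟩ * b (Fin.last n)) := by
  obtain ⟨m, rfl⟩ : ∃ m, n = m + 1 := ⟨n - 1, by omega⟩
  show (1 - s) * s =
      (∑ i : Fin m,
          a i.castSucc.castSucc *
            (b i.castSucc.castSucc * a (Fin.last (m + 1)) * b (Fin.last (m + 1)))) +
        (a (Fin.last m).castSucc * a (Fin.last (m + 1))) *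
          (b (Fin.last m).castSucc * b (Fin.last (m + 1)))
  rw [Fin.sum_univ_castSucc (n := m + 1)] at hsplit
  rw [Fin.sum_univ_castSucc (n := m)] at hsplit hs
  have hsum : (∑ i : Fin m,
      a i.castSucc.castSucc * (b i.castSucc.castSucc * a (Fin.last (m+1)) * b (Fin.last (m+1))))
      = (∑ i : Fin m, a i.castSucc.castSucc * b i.castSucc.castSucc)
        * (a (Fin.last (m+1)) * b (Fin.last (m+1))) := by
    rw [Finset.sum_mul]; exact Finset.sum_congr rfl fun i _ => by ring
  rw [hsum, hs]
  linear_combination -((∑ i : Fin m, a i.castSucc.castSucc * b i.castSucc.castSucc)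
    + a (Fin.last m).castSucc * b (Fin.last m).castSucc) * hsplit
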